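/- arXiv:2110.10789 — 5 statements merged into one kernel-verified Lean document; each statement's English description precedes it below -/
import Mathlib

section
/- Let p be a prime number and n_I ≥ 1 a natural number. Let ι be a finite index set, and for each y ∈ ι let n_y be a natural number with n_y ≤ n_I, let i_1(y), …, i_{n_y}(y) be positive integers, let a_1(y), …, a_{n_y}(y) be natural numbers with a_ℓ(y) ≤ p − 1 for all ℓ, and let e_y be an integer. Let g_X and g_Y be integers satisfying p^{n_I}·(2·g_Y − 2) = 2·g_X − 2 − ∑_{y∈ι} p^{n_I − n_y}·(p−1)·∑_{ℓ=1}^{n_y} p^{n_y − ℓ}·(i_ℓ(y) + 1). If ∑_{y∈ι} p^{n_I − n_y}·e_y > 2·g_X − 2, then ∑_{y∈ι} ⌊(e_y − ∑_{ℓ=1}^{n_y} a_ℓ(y)·p^{n_y − ℓ}·i_ℓ(y)) / p^{n_y}⌋ > 2·g_Y − 2. -/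
/-!
Write `q = p ^ n_y`. Since `q * ⌊x / q⌋ ≥ x - q + 1`, and the digits satisfy `a_ℓ ≤ p - 1`, each
summand of `deg E_j` satisfies
`q * ⌊(e_y - ∑ a_ℓ p^(n_y-ℓ) i_ℓ) / q⌋ ≥ e_y - (p - 1) ∑ p^(n_y-ℓ) (i_ℓ + 1)`,
the geometric sum `(p - 1) ∑ p^(n_y-ℓ) = q - 1` absorbing the rounding error. The right-hand side is
`e_y` minus the exponent of the different at `y`, so multiplying by `p^(n_I-n_y)` and summing over
`y` turns `deg E > 2 g_X - 2` into `p^(n_I) deg E_j > p^(n_I) (2 g_Y - 2)` by Riemann–Hurwitz.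
-/

open Finset

theorem sub_one_mul_sum_Icc_pow_sub {R : Type*} [Ring R] (p : R) (n : ℕ) :
    (p - 1) * ∑ ℓ ∈ Icc 1 n, p ^ (n - ℓ) = p ^ n - 1 := by
  rw [← Ico_add_one_right_eq_Icc, sum_Ico_reflect _ _ le_rfl, Nat.sub_self, Nat.add_sub_cancel,
    ← range_eq_Ico, mul_geom_sum]

theorem sum_digit_mul_add_pow_sub_one_le {R : Type*} [CommRing R] [LinearOrder R]
    [IsStrictOrderedRing R] {p : R} (hp : 0 ≤ p) {n : ℕ} {a i : ℕ → R}
    (ha : ∀ ℓ ∈ Icc 1 n, a ℓ ≤ p - 1) (hi : ∀ ℓ ∈ Icc 1 n, 0 ≤ i ℓ) :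
    ∑ ℓ ∈ Icc 1 n, a ℓ * p ^ (n - ℓ) * i ℓ + (p ^ n - 1) ≤
      (p - 1) * ∑ ℓ ∈ Icc 1 n, p ^ (n - ℓ) * (i ℓ + 1) := by
  have hsplit : (p - 1) * ∑ ℓ ∈ Icc 1 n, p ^ (n - ℓ) * (i ℓ + 1) =
      ∑ ℓ ∈ Icc 1 n, (p - 1) * p ^ (n - ℓ) * i ℓ + (p ^ n - 1) := by
    rw [← sub_one_mul_sum_Icc_pow_sub, mul_sum, mul_sum, ← sum_add_distrib]
    exact sum_congr rfl fun ℓ _ ↦ by ring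
  rw [hsplit]
  gcongr with ℓ hℓ
  · exact hi ℓ hℓ
  · exact ha ℓ hℓ

theorem pow_sub_mul_sub_le_pow_mul_fdiv {p : ℤ} (hp : 0 < p) {n N : ℕ} (hnN : n ≤ N)
    {a i : ℕ → ℤ} (ha : ∀ ℓ ∈ Icc 1 n, a ℓ ≤ p - 1) (hi : ∀ ℓ ∈ Icc 1 n, 0 ≤ i ℓ) (e : ℤ) :
    p ^ (N - n) * (e - (p - 1) * ∑ ℓ ∈ Icc 1 n, p ^ (n - ℓ) * (i ℓ + 1)) ≤
      p ^ N * Int.fdiv (e - ∑ ℓ ∈ Icc 1 n, a ℓ * p ^ (n - ℓ) * i ℓ) (p ^ n) := by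
  have hfloor := Int.lt_fdiv_add_one_mul_self
    (e - ∑ ℓ ∈ Icc 1 n, a ℓ * p ^ (n - ℓ) * i ℓ) (pow_pos hp n)
  have hdigits := sum_digit_mul_add_pow_sub_one_le hp.le ha hi
  calc p ^ (N - n) * (e - (p - 1) * ∑ ℓ ∈ Icc 1 n, p ^ (n - ℓ) * (i ℓ + 1))
      ≤ p ^ (N - n) *
          (p ^ n * Int.fdiv (e - ∑ ℓ ∈ Icc 1 n, a ℓ * p ^ (n - ℓ) * i ℓ) (p ^ n)) := by
        gcongr
        linarith
    _ = p ^ N * Int.fdiv (e - ∑ ℓ ∈ Icc 1 n, a ℓ * p ^ (n - ℓ) * i ℓ) (p ^ n) := by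
        rw [← mul_assoc, ← pow_add, Nat.sub_add_cancel hnN]

theorem divisor_Ej_degree_gt_general
    (p : ℕ) (hp : p.Prime) (nI : ℕ)
    (ι : Type*) [Fintype ι]
    (n : ι → ℕ) (hn : ∀ y, n y ≤ nI)
    (i : ι → ℕ → ℤ) (hi : ∀ y, ∀ ℓ ∈ Finset.Icc 1 (n y), 0 < i y ℓ)
    (a : ι → ℕ → ℕ) (ha : ∀ y, ∀ ℓ ∈ Finset.Icc 1 (n y), a y ℓ ≤ p - 1)
    (e : ι → ℤ) (gX gY : ℤ)
    (hRH : (p : ℤ) ^ nI * (2 * gY - 2) =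
      2 * gX - 2 - ∑ y, (p : ℤ) ^ (nI - n y) * ((p : ℤ) - 1) *
        ∑ ℓ ∈ Finset.Icc 1 (n y), (p : ℤ) ^ (n y - ℓ) * (i y ℓ + 1))
    (hdeg : ∑ y, (p : ℤ) ^ (nI - n y) * e y > 2 * gX - 2) :
    ∑ y, Int.fdiv
        (e y - ∑ ℓ ∈ Finset.Icc 1 (n y), (a y ℓ : ℤ) * (p : ℤ) ^ (n y - ℓ) * i y ℓ)
        ((p : ℤ) ^ (n y))
      > 2 * gY - 2 := by
  have hp0 : (0 : ℤ) < p := mod_cast hp.pos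
  have hdigit : ∀ y, ∀ ℓ ∈ Icc 1 (n y), (a y ℓ : ℤ) ≤ p - 1 := fun y ℓ hℓ ↦ by
    have := ha y ℓ hℓ
    omega
  have hlocal := sum_le_sum fun y (_ : y ∈ univ) ↦ pow_sub_mul_sub_le_pow_mul_fdiv hp0 (hn y)
    (hdigit y) (fun ℓ hℓ ↦ (hi y ℓ hℓ).le) (e y)
  rw [gt_iff_lt, ← mul_lt_mul_iff_right₀ (pow_pos hp0 nI), mul_sum]
  calc (p : ℤ) ^ nI * (2 * gY - 2)
      < ∑ y, (p : ℤ) ^ (nI - n y) * e y - ∑ y, (p : ℤ) ^ (nI - n y) * ((p : ℤ) - 1) *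
          ∑ ℓ ∈ Icc 1 (n y), (p : ℤ) ^ (n y - ℓ) * (i y ℓ + 1) := by linarith
    _ = ∑ y, (p : ℤ) ^ (nI - n y) * (e y - ((p : ℤ) - 1) *
          ∑ ℓ ∈ Icc 1 (n y), (p : ℤ) ^ (n y - ℓ) * (i y ℓ + 1)) := by
        rw [← sum_sub_distrib]
        exact sum_congr rfl fun y _ ↦ by ring
    _ ≤ _ := hlocal

/-- Proposition 2.1(ii) of the paper (combinatorial content): if
`deg E > 2 g(X) - 2` then `deg E_j > 2 g(Y) - 2`, where the genera are
related by the Riemann-Hurwitz formula for the cover `X → Y = X/I`. -/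
theorem divisor_Ej_degree_gt
    (p : ℕ) (hp : p.Prime) (nI : ℕ) (hnI : 1 ≤ nI)
    (ι : Type*) [Fintype ι]
    (n : ι → ℕ) (hn : ∀ y, n y ≤ nI)
    (i : ι → ℕ → ℤ) (hi : ∀ y, ∀ ℓ ∈ Finset.Icc 1 (n y), 0 < i y ℓ)
    (a : ι → ℕ → ℕ) (ha : ∀ y, ∀ ℓ ∈ Finset.Icc 1 (n y), a y ℓ ≤ p - 1)
    (e : ι → ℤ) (gX gY : ℤ)
    (hRH : (p : ℤ) ^ nI * (2 * gY - 2) =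
      2 * gX - 2 - ∑ y, (p : ℤ) ^ (nI - n y) * ((p : ℤ) - 1) *
        ∑ ℓ ∈ Finset.Icc 1 (n y), (p : ℤ) ^ (n y - ℓ) * (i y ℓ + 1))
    (hdeg : ∑ y, (p : ℤ) ^ (nI - n y) * e y > 2 * gX - 2) :
    ∑ y, Int.fdiv
        (e y - ∑ ℓ ∈ Finset.Icc 1 (n y), (a y ℓ : ℤ) * (p : ℤ) ^ (n y - ℓ) * i y ℓ)
        ((p : ℤ) ^ (n y))
      > 2 * gY - 2 :=
  divisor_Ej_degree_gt_general p hp nI ι n hn i hi a ha e gX gY hRH hdeg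
end

section
/- Let k be a field of prime characteristic p and let σ be a k-algebra automorphism of the rational function field k(X) = RatFunc k satisfying σ(X) = X + 1. Then σ has order p, and the fixed field of the cyclic subgroup generated by σ equals the intermediate field generated by X^p − X; that is, IntermediateField.fixedField (Subgroup.zpowers σ) = IntermediateField.adjoin k {X^p − X}. -/
/-!
A `k`-automorphism of `k(X)` is determined by the image of `X`, and `σ ^ n` sends `X` to `X + n`,
so `σ` has order `p`. The element `t = X ^ p - X` is `σ`-invariant because `(X + 1) ^ p = X ^ p + 1`,
hence `k(t)` lies in the fixed field of `⟨σ⟩`. By Artin's theorem `k(X)` has degree `p` over that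
fixed field, while `[k(X) : k(t)] = deg t = p`; so the two fields coincide.
-/

open Polynomial IntermediateField Module

namespace RatFunc

variable {K : Type*} [Field K]

theorem algHom_ext {L : Type*} [Field L] [Algebra K L] {f g : RatFunc K →ₐ[K] L}
    (h : f X = g X) : f = g := by
  have key := adjoin_algHom_ext K (φ₁ := f.comp (adjoin K {(X : RatFunc K)}).val)
    (φ₂ := g.comp (adjoin K {(X : RatFunc K)}).val) (by rintro x rfl; exact h)
  ext x
  exact DFunLike.congr_fun key ⟨x, adjoin_X (K := K) ▸ mem_top⟩

theorem finrank_adjoin_X_pow_sub_X {n : ℕ} (hn : 1 < n) :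
    finrank (adjoin K {(X : RatFunc K) ^ n - X}) (RatFunc K) = n := by
  have : (X : RatFunc K) ^ n - X = algebraMap K[X] (RatFunc K) (.X ^ n - .X) := by
    simp [algebraMap_X]
  rw [finrank_eq_max_natDegree, this, num_algebraMap, denom_algebraMap, natDegree_one,
    FiniteField.X_pow_card_sub_X_natDegree_eq K hn, max_eq_left (Nat.zero_le n)]

section Translation

variable {σ : RatFunc K ≃ₐ[K] RatFunc K}

theorem pow_apply_X_eq_X_add_natCast (hσ : σ X = X + 1) (n : ℕ) :
    (σ ^ n) X = X + (n : RatFunc K) := by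
  induction n with
  | zero => simp
  | succ n ih =>
    rw [pow_succ', AlgEquiv.mul_apply, ih, map_add, hσ, map_natCast, Nat.cast_succ]
    ring

theorem pow_eq_one_iff_ringChar_dvd (hσ : σ X = X + 1) {n : ℕ} :
    σ ^ n = 1 ↔ ringChar K ∣ n := by
  rw [← ringChar.spec, ← (algebraMap K (RatFunc K)).injective.eq_iff, map_natCast, map_zero,
    ← add_eq_left (a := (X : RatFunc K)), ← pow_apply_X_eq_X_add_natCast hσ]
  exact ⟨fun h => by rw [h, AlgEquiv.one_apply],
    fun h => AlgEquiv.coe_toAlgHom_injective (algHom_ext h)⟩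

theorem orderOf_eq_ringChar (hσ : σ X = X + 1) : orderOf σ = ringChar K :=
  Nat.dvd_antisymm (orderOf_dvd_of_pow_eq_one ((pow_eq_one_iff_ringChar_dvd hσ).2 dvd_rfl))
    ((pow_eq_one_iff_ringChar_dvd hσ).1 (pow_orderOf_eq_one σ))

theorem apply_X_pow_char_sub_X (p : ℕ) [Fact p.Prime] [CharP K p] (hσ : σ X = X + 1) :
    σ (X ^ p - X) = X ^ p - X := by
  rw [map_sub, map_pow, hσ, add_pow_char, one_pow, add_sub_add_right_eq_sub]

end Translation

end RatFunc

namespace IntermediateField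

variable {F E : Type*} [Field F] [Field E] [Algebra F E]

theorem adjoin_simple_le_fixedField_zpowers {σ : E ≃ₐ[F] E} {x : E} (hx : σ x = x) :
    F⟮x⟯ ≤ fixedField (Subgroup.zpowers σ) :=
  adjoin_simple_le_iff.2 <| (mem_fixedField_iff _ _).2 fun _ hg =>
    Subgroup.zpowers_le.2 (show σ ∈ MulAction.stabilizer _ x from hx) hg

theorem finrank_fixedField_eq_nat_card (H : Subgroup (E ≃ₐ[F] E)) [Finite H] :
    finrank (fixedField H) E = Nat.card H := by
  have := Fintype.ofFinite H
  rw [Nat.card_eq_fintype_card]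
  exact FixedPoints.finrank_eq_card H E

end IntermediateField

/-- §4.1 of the paper (Artin–Schreier fixed field): if `σ` is a `k`-algebra
automorphism of `k(X)` with `σ(X) = X + 1` in characteristic `p`, then `σ`
has order `p` and the fixed field of `⟨σ⟩` is `k(X^p - X)`. -/
theorem fixedField_zpowers_artinSchreier
    (k : Type*) [Field k] (p : ℕ) (hp : p.Prime) [CharP k p]
    (σ : RatFunc k ≃ₐ[k] RatFunc k) (hσ : σ RatFunc.X = RatFunc.X + 1) :
    orderOf σ = p ∧
    IntermediateField.fixedField (Subgroup.zpowers σ) =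
      IntermediateField.adjoin k {RatFunc.X ^ p - RatFunc.X} := by
  have := Fact.mk hp
  have hord : orderOf σ = p := (RatFunc.orderOf_eq_ringChar hσ).trans (ringChar.eq k p)
  have : Finite (Subgroup.zpowers σ) := (orderOf_pos_iff.1 (hord ▸ hp.pos)).finite_zpowers
  have hrank := RatFunc.finrank_adjoin_X_pow_sub_X (K := k) hp.one_lt
  have : FiniteDimensional (adjoin k {RatFunc.X ^ p - RatFunc.X}) (RatFunc k) :=
    Module.finite_of_finrank_pos (hrank ▸ hp.pos)
  have hle := adjoin_simple_le_fixedField_zpowers (RatFunc.apply_X_pow_char_sub_X p hσ)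
  refine ⟨hord, (eq_of_le_of_finrank_eq' hle ?_).symm⟩
  rw [hrank, finrank_fixedField_eq_nat_card, Nat.card_zpowers, hord]
end

section
/- Let O be a discrete valuation ring with maximal ideal 𝔪 and fraction field F, let G be a finite group, let V be a module over the group algebra F[G], and let M ⊆ V be an O[G]-submodule that is finitely generated as an O-module and spans V over F. Let e₁ and e₂ be central idempotents of F[G] with e₁·e₂ = 0 and e₁ + e₂ = 1, and set M_i := M ∩ e_i·V for i = 1, 2. Then the following are equivalent: (i) there exist f₁ ∈ M₁ and f₂ ∈ M₂ such that f₁ − f₂ ∈ 𝔪·M but f₁ ∉ 𝔪·M; (ii) M ≠ M₁ + M₂ (equivalently, M is not the internal direct sum of M₁ and M₂). -/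
/-!
Applying `e₁` to a congruence `f₁ - f₂ ∈ 𝔪 • M` gives `f₁ ∈ e₁ • (𝔪 • M) = 𝔪 • e₁ • M`, which
lies in `𝔪 • M` as soon as `e₁ • M ⊆ M`, i.e. as soon as `M = M₁ + M₂`. Conversely, let `x ∈ M`
with `e₁ • x ∉ M`, and let `π` be a uniformizer. Since `M` spans `V`, some `π ^ k • e₁ • x` lies
in `M`, so after replacing `x` by a suitable `π ^ n • x` we may assume `π • e₁ • x ∈ M`. Then
`f₁ = π • e₁ • x` and `f₂ = -π • e₂ • x` differ by `π • x ∈ 𝔪 • M = π • M`, while `f₁ ∉ π • M`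
because `V` has no `π`-torsion.
-/

open IsLocalRing

section Decomposition

variable {R O V : Type*} [Ring R] [CommRing O] [AddCommGroup V] [Module R V] [Module O V]
  {e₁ e₂ : R}

theorem smul_eq_self_of_mem_range (horth : e₁ * e₂ = 0) (hsum : e₁ + e₂ = 1) {y : V}
    (hy : y ∈ Set.range (fun v : V => e₁ • v)) : e₁ • y = y := by
  obtain ⟨v, rfl⟩ := hy
  have hidem : e₁ * e₁ = e₁ := by simpa [mul_add, horth] using congrArg (e₁ * ·) hsum
  rw [smul_smul, hidem]

theorem smul_eq_zero_of_mem_range (horth : e₁ * e₂ = 0) {z : V}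
    (hz : z ∈ Set.range (fun v : V => e₂ • v)) : e₁ • z = 0 := by
  obtain ⟨v, rfl⟩ := hz
  rw [smul_smul, horth, zero_smul]

theorem exists_add_iff_smul_mem (horth : e₁ * e₂ = 0) (hsum : e₁ + e₂ = 1) (M : AddSubgroup V)
    {x : V} (hx : x ∈ M) :
    (∃ y ∈ (M : Set V) ∩ Set.range (fun v : V => e₁ • v),
      ∃ z ∈ (M : Set V) ∩ Set.range (fun v : V => e₂ • v), x = y + z) ↔ e₁ • x ∈ M := by
  constructor
  · rintro ⟨y, ⟨hyM, hy⟩, z, ⟨-, hz⟩, rfl⟩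
    rwa [smul_add, smul_eq_self_of_mem_range horth hsum hy, smul_eq_zero_of_mem_range horth hz,
      add_zero]
  · intro h
    have hsplit : e₂ • x = x - e₁ • x := by
      rw [eq_sub_iff_add_eq, ← add_smul, add_comm, hsum, one_smul]
    exact ⟨e₁ • x, ⟨h, x, rfl⟩, e₂ • x, ⟨hsplit ▸ M.sub_mem hx h, x, rfl⟩, by rw [hsplit]; abel⟩

variable [SMulCommClass R O V]

theorem mem_smul_of_sub_mem_smul (horth : e₁ * e₂ = 0) (hsum : e₁ + e₂ = 1) {M : Submodule O V}
    (hM : ∀ x ∈ M, e₁ • x ∈ M) (I : Ideal O) {f₁ f₂ : V}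
    (hf₁ : f₁ ∈ Set.range (fun v : V => e₁ • v)) (hf₂ : f₂ ∈ Set.range (fun v : V => e₂ • v))
    (h : f₁ - f₂ ∈ I • M) : f₁ ∈ I • M := by
  have hproj : e₁ • (f₁ - f₂) = f₁ := by
    rw [smul_sub, smul_eq_self_of_mem_range horth hsum hf₁, smul_eq_zero_of_mem_range horth hf₂,
      sub_zero]
  let p := DistribSMul.toLinearMap O V e₁
  have hpM : M.map p ≤ M := Submodule.map_le_iff_le_comap.mpr hM
  rw [← hproj]
  exact smul_mono_right I hpM (Submodule.map_smul'' I M p ▸ Submodule.mem_map_of_mem h)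

theorem exists_mem_smul_notMem_of_pow_smul_mem (e : R) (a : O) {M : Submodule O V} {x : V}
    (hx : x ∈ M) (hex : e • x ∉ M) {k : ℕ} (hk : a ^ k • e • x ∈ M) :
    ∃ w ∈ M, e • w ∉ M ∧ a • e • w ∈ M := by
  induction k generalizing x with
  | zero => exact absurd (by simpa using hk) hex
  | succ k ih =>
    by_cases hax : a • e • x ∈ M
    · exact ⟨x, hx, hex, hax⟩
    · refine ih (M.smul_mem a hx) (by rwa [smul_comm]) ?_
      rwa [smul_comm e a, smul_smul, ← pow_succ]

end Decomposition

section DiscreteValuationRing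

variable {O V : Type*} [CommRing O] [IsDomain O] [IsDiscreteValuationRing O] [AddCommGroup V]
  [Module O V] {π : O}

theorem smul_mem_maximalIdeal_smul_iff [Module.IsTorsionFree O V] (hπ : Irreducible π)
    (M : Submodule O V) {y : V} : π • y ∈ maximalIdeal O • M ↔ y ∈ M := by
  rw [(IsDiscreteValuationRing.irreducible_iff_uniformizer π).mp hπ,
    Submodule.ideal_span_singleton_smul, Submodule.mem_smul_pointwise_iff_exists]
  constructor
  · rintro ⟨m, hm, hmy⟩
    rwa [← smul_right_injective V hπ.ne_zero hmy]
  · exact fun hy => ⟨y, hy, rfl⟩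

theorem exists_pow_smul_mem_of_mem_span (F : Type*) [Field F] [Algebra O F] [IsFractionRing O F]
    [Module F V] [IsScalarTower O F V] (hπ : Irreducible π) (M : Submodule O V) {v : V}
    (hv : v ∈ Submodule.span F (M : Set V)) : ∃ k : ℕ, π ^ k • v ∈ M := by
  obtain ⟨y, hy, z, rfl⟩ := (IsLocalization.mem_span_iff (nonZeroDivisors O)).mp hv
  rw [Submodule.span_eq] at hy
  obtain ⟨k, u, hu⟩ := IsDiscreteValuationRing.eq_unit_mul_pow_irreducible
    (nonZeroDivisors.coe_ne_zero z) hπ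
  have hz : (z : O) • IsLocalization.mk' F (1 : O) z • y = y := by
    rw [← algebraMap_smul F, smul_smul, IsLocalization.mk'_spec', map_one, one_smul]
  have hπk : π ^ k = ((u⁻¹ : Oˣ) : O) * z := by rw [hu, ← mul_assoc, Units.inv_mul, one_mul]
  exact ⟨k, by rw [hπk, mul_smul, hz]; exact M.smul_mem _ hy⟩

theorem exists_congruence_of_smul_mem {R : Type*} [Ring R] [Module R V] [SMulCommClass R O V]
    [Module.IsTorsionFree O V] {e₁ e₂ : R} (hsum : e₁ + e₂ = 1) (hπ : Irreducible π)
    {M : Submodule O V} {w : V} (hw : w ∈ M) (hew : e₁ • w ∉ M) (hπw : π • e₁ • w ∈ M) :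
    ∃ f₁ ∈ (M : Set V) ∩ Set.range (fun v : V => e₁ • v),
      ∃ f₂ ∈ (M : Set V) ∩ Set.range (fun v : V => e₂ • v),
        f₁ - f₂ ∈ maximalIdeal O • M ∧ f₁ ∉ maximalIdeal O • M := by
  have hf₂ : e₂ • -(π • w) = π • e₁ • w - π • w := by
    rw [eq_sub_of_add_eq' hsum, sub_smul, one_smul, smul_neg, smul_comm e₁ π]
    abel
  refine ⟨π • e₁ • w, ⟨hπw, π • w, smul_comm _ _ _⟩, e₂ • -(π • w), ⟨?_, _, rfl⟩, ?_,
    (smul_mem_maximalIdeal_smul_iff hπ M).not.mpr hew⟩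
  · rw [SetLike.mem_coe, hf₂]
    exact M.sub_mem hπw (M.smul_mem π hw)
  · rw [hf₂, sub_sub_cancel]
    exact Submodule.smul_mem_smul ((mem_maximalIdeal π).mpr hπ.not_isUnit) hw

end DiscreteValuationRing

theorem lattice_congruence_criterion_general
    (O : Type*) [CommRing O] [IsDomain O] [IsDiscreteValuationRing O]
    (F : Type*) [Field F] [Algebra O F] [IsFractionRing O F]
    (G : Type*) [Group G]
    (V : Type*) [AddCommGroup V] [Module (MonoidAlgebra F G) V]
    [Module F V] [IsScalarTower F (MonoidAlgebra F G) V]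
    [Module O V] [IsScalarTower O F V]
    (M : Submodule O V)
    (hMspan : Submodule.span F (M : Set V) = ⊤)
    (e₁ e₂ : MonoidAlgebra F G)
    (horth : e₁ * e₂ = 0) (hsum : e₁ + e₂ = 1) :
    (∃ f₁ ∈ (M : Set V) ∩ Set.range (fun v : V => e₁ • v),
      ∃ f₂ ∈ (M : Set V) ∩ Set.range (fun v : V => e₂ • v),
        f₁ - f₂ ∈ (IsLocalRing.maximalIdeal O) • M ∧
        f₁ ∉ (IsLocalRing.maximalIdeal O) • M) ↔
    ¬ (∀ x ∈ M, ∃ y ∈ (M : Set V) ∩ Set.range (fun v : V => e₁ • v),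
        ∃ z ∈ (M : Set V) ∩ Set.range (fun v : V => e₂ • v), x = y + z) := by
  have : SMulCommClass (MonoidAlgebra F G) O V :=
    ⟨fun e c v => by rw [← algebraMap_smul F c v, smul_comm, algebraMap_smul]⟩
  have : Module.IsTorsionFree O V := .trans_faithfulSMul O F V
  have hdecomp (x : V) (hx : x ∈ M) := exists_add_iff_smul_mem horth hsum M.toAddSubgroup hx
  constructor
  · rintro ⟨f₁, ⟨-, hf₁⟩, f₂, ⟨-, hf₂⟩, hsub, hf₁M⟩ hM
    exact hf₁M <| mem_smul_of_sub_mem_smul horth hsum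
      (fun x hx => (hdecomp x hx).mp (hM x hx)) _ hf₁ hf₂ hsub
  · intro hM
    obtain ⟨x, hx, hex⟩ : ∃ x ∈ M, e₁ • x ∉ M := by
      contrapose! hM
      exact fun x hx => (hdecomp x hx).mpr (hM x hx)
    obtain ⟨π, hπ⟩ := IsDiscreteValuationRing.exists_irreducible O
    obtain ⟨k, hk⟩ := exists_pow_smul_mem_of_mem_span F hπ M (hMspan ▸ Submodule.mem_top)
    obtain ⟨w, hw, hew, hπw⟩ := exists_mem_smul_notMem_of_pow_smul_mem e₁ π hx hex hk
    exact exists_congruence_of_smul_mem hsum hπ hw hew hπw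

/-- The lattice-theoretic criterion behind Theorem 5.4 of the paper: for an
`O[G]`-lattice `M` spanning a module `V` over `F[G]` (with `O` a DVR with
maximal ideal `𝔪` and fraction field `F`), and orthogonal central idempotents
`e₁ + e₂ = 1` of `F[G]`, setting `Mᵢ = M ∩ eᵢ·V`, there is a nontrivial
congruence modulo `𝔪` linking `M₁` and `M₂` (a pair `f₁ ∈ M₁`, `f₂ ∈ M₂` with
`f₁ - f₂ ∈ 𝔪·M` but `f₁ ∉ 𝔪·M`) if and only if `M ≠ M₁ + M₂`. -/
theorem lattice_congruence_criterion
    (O : Type*) [CommRing O] [IsDomain O] [IsDiscreteValuationRing O]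
    (F : Type*) [Field F] [Algebra O F] [IsFractionRing O F]
    (G : Type*) [Group G] [Finite G]
    (V : Type*) [AddCommGroup V] [Module (MonoidAlgebra F G) V]
    [Module F V] [IsScalarTower F (MonoidAlgebra F G) V]
    [Module O V] [IsScalarTower O F V]
    (M : Submodule O V)
    (hMG : ∀ (g : G), ∀ x ∈ M, (MonoidAlgebra.of F G g : MonoidAlgebra F G) • x ∈ M)
    (hMfg : M.FG)
    (hMspan : Submodule.span F (M : Set V) = ⊤)
    (e₁ e₂ : MonoidAlgebra F G)
    (he₁central : ∀ x, e₁ * x = x * e₁) (he₂central : ∀ x, e₂ * x = x * e₂)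
    (he₁ : IsIdempotentElem e₁) (he₂ : IsIdempotentElem e₂)
    (horth : e₁ * e₂ = 0) (hsum : e₁ + e₂ = 1) :
    (∃ f₁ ∈ (M : Set V) ∩ Set.range (fun v : V => e₁ • v),
      ∃ f₂ ∈ (M : Set V) ∩ Set.range (fun v : V => e₂ • v),
        f₁ - f₂ ∈ (IsLocalRing.maximalIdeal O) • M ∧
        f₁ ∉ (IsLocalRing.maximalIdeal O) • M) ↔
    ¬ (∀ x ∈ M, ∃ y ∈ (M : Set V) ∩ Set.range (fun v : V => e₁ • v),
        ∃ z ∈ (M : Set V) ∩ Set.range (fun v : V => e₂ • v), x = y + z) :=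
  lattice_congruence_criterion_general O F G V M hMspan e₁ e₂ horth hsum
end

section
/- Let ℓ be an odd prime, let ζ ∈ ℂ be a primitive ℓ-th root of unity, and let G := ∑_{a=1}^{ℓ−1} (legendreSym ℓ a)·ζ^a be the quadratic Gauss sum. Then for every natural number M with M ≤ ℓ − 1, ∑_{a=1}^{(ℓ−1)/2} ∑_{d=1}^{ℓ−1−M} ζ^{−a²·d} = −(ℓ−1)/2 + (M − (∑_{d=1}^{M} legendreSym ℓ d)·G)/2. -/
/-!
Write `ψ(x) = ζ^x` on `𝔽_ℓ` and `χ` for the quadratic character. For `c ≠ 0`, counting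
square roots with `χ` gives `∑_{x ∈ 𝔽_ℓ} ψ(c x²) = χ(c) G`, while pairing `x` with `-x` shows
that the left side is `1 + 2 ∑_{a=1}^{(ℓ-1)/2} ψ(c a²)`. So the inner sum over `a` is
`((-d/ℓ) G - 1) / 2`. Summing over `d`, the reflection `d ↦ ℓ - d` turns `∑_{d ≤ ℓ-1-M} (-d/ℓ)`
into `∑_{M < d < ℓ} (d/ℓ)`, which is `-∑_{d ≤ M} (d/ℓ)` because the Legendre symbols sum to zero.
-/

open Finset

theorem Finset.sum_Icc_one_add_sum_Icc_add_one {M : Type*} [AddCommMonoid M] (f : ℕ → M)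
    {a b : ℕ} (hab : a ≤ b) :
    ∑ k ∈ Icc 1 a, f k + ∑ k ∈ Icc (a + 1) b, f k = ∑ k ∈ Icc 1 b, f k := by
  have h : ∀ c, Icc 1 c = Ioc 0 c := Icc_add_one_left_eq_Ioc 0
  rw [h, h, Icc_add_one_left_eq_Ioc]
  exact sum_Ioc_consecutive f (Nat.zero_le a) hab

namespace ZMod

variable {n : ℕ} {M : Type*}

theorem sum_univ_eq_add_sum_Icc [AddCommMonoid M] [NeZero n] (f : ZMod n → M) :
    ∑ x, f x = f 0 + ∑ k ∈ Icc 1 (n - 1), f k := by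
  obtain ⟨m, rfl⟩ : ∃ m, n = m + 1 := Nat.exists_eq_succ_of_ne_zero (NeZero.ne n)
  calc ∑ x, f x = ∑ k ∈ range (m + 1), f k := by
        rw [← Fin.sum_univ_eq_sum_range (fun k => f k)]
        exact Fintype.sum_congr _ _ fun x => congrArg f (natCast_zmod_val x).symm
    _ = f 0 + ∑ k ∈ Icc 1 (m + 1 - 1), f k := by
        rw [Nat.range_succ_eq_Icc_zero, Icc_eq_cons_Ioc (Nat.zero_le _), sum_cons,
          ← Icc_add_one_left_eq_Ioc, zero_add, Nat.cast_zero, add_tsub_cancel_right]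

theorem sum_Icc_neg_eq_sum_Icc [AddCommMonoid M] {k : ℕ} (hk : k < n) (f : ZMod n → M) :
    ∑ d ∈ Icc 1 k, f (-(d : ZMod n)) = ∑ d ∈ Icc (n - k) (n - 1), f d := by
  refine sum_nbij' (n - ·) (n - ·) ?_ ?_ ?_ ?_ ?_ <;> intro d hd <;>
    simp only [mem_Icc] at hd ⊢
  · omega
  · omega
  · omega
  · omega
  · rw [Nat.cast_sub (by omega), natCast_self, zero_sub]

theorem sum_univ_comp_sq [AddCommMonoid M] [NeZero n] (hn : Odd n) (f : ZMod n → M) :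
    ∑ x, f (x ^ 2) = f 0 + 2 • ∑ a ∈ Icc 1 ((n - 1) / 2), f ((a : ZMod n) ^ 2) := by
  obtain ⟨h, rfl⟩ := hn
  rw [sum_univ_eq_add_sum_Icc, show (2 * h + 1 - 1) / 2 = h by omega,
    ← sum_Icc_one_add_sum_Icc_add_one _ (by omega : h ≤ 2 * h + 1 - 1),
    show h + 1 = 2 * h + 1 - h by omega, ← sum_Icc_neg_eq_sum_Icc (by omega) fun y => f (y ^ 2)]
  simp only [zero_pow two_ne_zero, neg_sq, two_nsmul]

theorem sum_Icc_neg_eq_neg_sum_Icc [AddCommGroup M] [NeZero n] {f : ZMod n → M}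
    (hf : ∑ x, f x = 0) (hf₀ : f 0 = 0) {m : ℕ} (hm : m ≤ n - 1) :
    ∑ d ∈ Icc 1 (n - 1 - m), f (-(d : ZMod n)) = -∑ d ∈ Icc 1 m, f d := by
  have hn := NeZero.pos n
  rw [sum_Icc_neg_eq_sum_Icc (by omega), show n - (n - 1 - m) = m + 1 by omega,
    eq_neg_iff_add_eq_zero, add_comm, sum_Icc_one_add_sum_Icc_add_one _ hm, ← hf,
    sum_univ_eq_add_sum_Icc, hf₀, zero_add]

theorem ringChar_ne_two_of_odd (hn : Odd n) : ringChar (ZMod n) ≠ 2 := by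
  rw [ringChar_zmod_n]; rintro rfl; exact Nat.not_odd_iff_even.2 even_two hn

end ZMod

section QuadraticGaussSum

variable {F : Type*} [Field F] [Fintype F] [DecidableEq F]

theorem sum_comp_sq_eq_sum_quadraticChar {M : Type*} [AddCommGroup M] (hF : ringChar F ≠ 2)
    (f : F → M) : ∑ x, f (x ^ 2) = ∑ y, (quadraticChar F y + 1) • f y := by
  rw [← sum_fiberwise univ (· ^ 2) (fun x => f (x ^ 2))]
  refine sum_congr rfl fun y _ => ?_
  rw [← quadraticChar_card_sqrts hF y, natCast_zsmul, ← sum_const]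
  exact sum_congr (by ext; simp) fun x hx => by rw [(by simpa using hx : x ^ 2 = y)]

variable {R : Type*} [CommRing R] [IsDomain R]

theorem sum_addChar_sq_eq_gaussSum (hF : ringChar F ≠ 2) {ψ : AddChar F R} (hψ : ψ ≠ 1) :
    ∑ x, ψ (x ^ 2) = gaussSum ((quadraticChar F).ringHomComp (Int.castRingHom R)) ψ := by
  simp only [sum_comp_sq_eq_sum_quadraticChar hF, gaussSum, add_smul, one_smul, sum_add_distrib,
    AddChar.sum_eq_zero_of_ne_one hψ, add_zero, zsmul_eq_mul, MulChar.ringHomComp_apply, eq_intCast]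

theorem sum_addChar_mul_sq (hF : ringChar F ≠ 2) {ψ : AddChar F R} (hψ : ψ.IsPrimitive) {c : F}
    (hc : c ≠ 0) :
    ∑ x, ψ (c * x ^ 2) = (quadraticChar F).ringHomComp (Int.castRingHom R) c *
      gaussSum ((quadraticChar F).ringHomComp (Int.castRingHom R)) ψ := by
  set χ := (quadraticChar F).ringHomComp (Int.castRingHom R)
  calc ∑ x, ψ (c * x ^ 2) = gaussSum χ (ψ.mulShift (Units.mk0 c hc)) :=
        sum_addChar_sq_eq_gaussSum hF (hψ hc)
    _ = χ c * gaussSum χ ψ := by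
        rw [gaussSum_mulShift_eq, ((quadraticChar_isQuadratic F).comp _).inv, Units.val_mk0]

theorem two_mul_sum_Icc_addChar_mul_sq {p : ℕ} [Fact p.Prime] (hp : Odd p)
    {ψ : AddChar (ZMod p) R} (hψ : ψ.IsPrimitive) {c : ZMod p} (hc : c ≠ 0) :
    2 * ∑ a ∈ Icc 1 ((p - 1) / 2), ψ (c * (a : ZMod p) ^ 2) =
      (quadraticChar (ZMod p)).ringHomComp (Int.castRingHom R) c *
        gaussSum ((quadraticChar (ZMod p)).ringHomComp (Int.castRingHom R)) ψ - 1 := by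
  have h := ZMod.sum_univ_comp_sq hp fun y => ψ (c * y)
  rw [sum_addChar_mul_sq (ZMod.ringChar_ne_two_of_odd hp) hψ hc, mul_zero,
    AddChar.map_zero_eq_one, two_nsmul] at h
  linear_combination -h

end QuadraticGaussSum

theorem AddChar.zmodChar_neg_natCast {n : ℕ} [NeZero n] {C : Type*} [DivisionCommMonoid C]
    {ζ : C} (hζ : ζ ^ n = 1) (m : ℕ) : zmodChar n hζ (-(m : ZMod n)) = ζ ^ (-(m : ℤ)) := by
  rw [map_neg_eq_inv, zmodChar_apply', zpow_neg, zpow_natCast]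

section RootOfUnity

variable {p : ℕ} [Fact p.Prime]

theorem gaussSum_zmodChar_eq_sum_Icc {R : Type*} [CommRing R] {ζ : R} (hζ : ζ ^ p = 1) :
    gaussSum ((quadraticChar (ZMod p)).ringHomComp (Int.castRingHom R)) (AddChar.zmodChar p hζ) =
      ∑ a ∈ Icc 1 (p - 1), (legendreSym p a : R) * ζ ^ a := by
  simp [gaussSum, ZMod.sum_univ_eq_add_sum_Icc, AddChar.zmodChar_apply', legendreSym]

variable {K : Type*} [Field K] {ζ : K}

theorem IsPrimitiveRoot.two_mul_sum_Icc_zpow_neg_sq_mul (hp : Odd p) (hζ : IsPrimitiveRoot ζ p)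
    {d : ℕ} (hd : ¬p ∣ d) :
    2 * ∑ a ∈ Icc 1 ((p - 1) / 2), ζ ^ (-((a : ℤ) ^ 2 * d)) =
      (legendreSym p (-d) : K) * ∑ a ∈ Icc 1 (p - 1), (legendreSym p a : K) * ζ ^ a - 1 := by
  have hd₀ : -(d : ZMod p) ≠ 0 := by rwa [neg_ne_zero, Ne, ZMod.natCast_eq_zero_iff]
  have hχ : (legendreSym p (-d) : K) =
      (quadraticChar (ZMod p)).ringHomComp (Int.castRingHom K) (-d) := by simp [legendreSym]
  rw [← gaussSum_zmodChar_eq_sum_Icc hζ.pow_eq_one, hχ, ← two_mul_sum_Icc_addChar_mul_sq hp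
    (AddChar.zmodChar_primitive_of_primitive_root p hζ) hd₀]
  congr 1
  refine sum_congr rfl fun a _ => ?_
  rw [show -(d : ZMod p) * a ^ 2 = -((a ^ 2 * d : ℕ) : ZMod p) by push_cast; ring,
    AddChar.zmodChar_neg_natCast, Nat.cast_mul, Nat.cast_pow]

end RootOfUnity

/-- The character-sum identity behind Equation (6.10) (eq:ValueModular_r0) of
the paper: for an odd prime `ℓ`, a primitive `ℓ`-th root of unity `ζ ∈ ℂ`, the
quadratic Gauss sum `G = ∑_{a=1}^{ℓ-1} (a/ℓ) ζ^a`, and `M ≤ ℓ - 1`,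
`∑_{a=1}^{(ℓ-1)/2} ∑_{d=1}^{ℓ-1-M} ζ^{-a²d}
  = -(ℓ-1)/2 + (M - (∑_{d=1}^{M} (d/ℓ))·G)/2`. -/
theorem gauss_sum_double_sum
    (ℓ : ℕ) [Fact ℓ.Prime] (hℓ : Odd ℓ)
    (ζ : ℂ) (hζ : IsPrimitiveRoot ζ ℓ)
    (G : ℂ) (hG : G = ∑ a ∈ Finset.Icc 1 (ℓ - 1), (legendreSym ℓ a : ℂ) * ζ ^ a)
    (M : ℕ) (hM : M ≤ ℓ - 1) :
    ∑ a ∈ Finset.Icc 1 ((ℓ - 1) / 2), ∑ d ∈ Finset.Icc 1 (ℓ - 1 - M),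
        ζ ^ (-((a : ℤ) ^ 2 * (d : ℤ))) =
      -(((ℓ : ℂ) - 1) / 2) +
        ((M : ℂ) - (∑ d ∈ Finset.Icc 1 M, (legendreSym ℓ d : ℂ)) * G) / 2 := by
  have hinner (d : ℕ) (hd : d ∈ Icc 1 (ℓ - 1 - M)) :
      ∑ a ∈ Icc 1 ((ℓ - 1) / 2), ζ ^ (-((a : ℤ) ^ 2 * d)) =
        ((legendreSym ℓ (-d) : ℂ) * G - 1) / 2 := by
    rw [mem_Icc] at hd
    rw [eq_div_iff two_ne_zero, mul_comm, hG,
      hζ.two_mul_sum_Icc_zpow_neg_sq_mul hℓ (Nat.not_dvd_of_pos_of_lt (by omega) (by omega))]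
  have hreflect : ∑ d ∈ Icc 1 (ℓ - 1 - M), (legendreSym ℓ (-d) : ℂ) =
      -∑ d ∈ Icc 1 M, (legendreSym ℓ d : ℂ) := by
    have hsum : ∑ x, (quadraticChar (ZMod ℓ) x : ℂ) = 0 := by
      exact_mod_cast quadraticChar_sum_zero (ZMod.ringChar_ne_two_of_odd hℓ)
    simpa [legendreSym] using ZMod.sum_Icc_neg_eq_neg_sum_Icc hsum (by simp) hM
  rw [sum_comm, sum_congr rfl hinner, ← sum_div, sum_sub_distrib, ← sum_mul, hreflect, sum_const,
    Nat.card_Icc, nsmul_eq_mul, mul_one, Nat.add_sub_cancel, Nat.cast_sub hM,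
    Nat.cast_pred (Fact.out : ℓ.Prime).pos]
  ring
end

section
/- Let ℓ be an odd prime, let ζ ∈ ℂ be a primitive ℓ-th root of unity, and let G := ∑_{a=1}^{ℓ−1} (legendreSym ℓ a)·ζ^a be the quadratic Gauss sum. Then ∑_{d=1}^{ℓ−1} (d/ℓ)·∑_{a=1}^{(ℓ−1)/2} ζ^{a²·d} = −(ℓ−1)/4 + (G/(2ℓ))·∑_{d=1}^{ℓ−1} d·(legendreSym ℓ d), where d/ℓ denotes the rational number d/ℓ viewed in ℂ. -/
/-
For `ℓ ∤ d`, the substitution `y = a²` weights each residue `y` by its number `1 + (y/ℓ)` of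
square roots, so `∑_{a mod ℓ} ζ^{a²d}` is a vanishing sum `∑_y ζ^{yd}` plus the twisted Gauss sum
`∑_y (y/ℓ) ζ^{yd} = (d/ℓ) G`. The terms `a` and `ℓ - a` agree, so this full sum is
`1 + 2 ∑_{a=1}^{(ℓ-1)/2} ζ^{a²d}`. Weighting by `d/ℓ` and using `∑_{d=1}^{ℓ-1} d = ℓ(ℓ-1)/2`
gives the identity.
-/

open Finset

theorem ZMod.sum_eq_sum_range {M : Type*} [AddCommMonoid M] (n : ℕ) [NeZero n]
    (f : ZMod n → M) : ∑ x, f x = ∑ k ∈ range n, f k :=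
  sum_nbij' ZMod.val Nat.cast (fun x _ ↦ mem_range.mpr x.val_lt) (by simp)
    (fun x _ ↦ ZMod.natCast_zmod_val x) (fun k hk ↦ ZMod.val_cast_of_lt (mem_range.mp hk))
    (fun x _ ↦ by rw [ZMod.natCast_zmod_val])

theorem Finset.sum_range_eq_add_sum_Icc {M : Type*} [AddCommMonoid M] {n : ℕ} (hn : n ≠ 0)
    (f : ℕ → M) : ∑ k ∈ range n, f k = f 0 + ∑ k ∈ Icc 1 (n - 1), f k := by
  have hIcc : Icc 1 (n - 1) = Ico 1 n := by ext k; simp only [mem_Ico, mem_Icc]; omega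
  rw [hIcc, range_eq_Ico, sum_eq_sum_Ico_succ_bot (Nat.pos_of_ne_zero hn)]

theorem Finset.sum_Icc_eq_two_nsmul_sum_Icc_half {M : Type*} [AddCommMonoid M] {n : ℕ}
    (hn : Odd n) (f : ℕ → M) (hf : ∀ k ∈ Icc 1 (n - 1), f (n - k) = f k) :
    ∑ k ∈ Icc 1 (n - 1), f k = 2 • ∑ k ∈ Icc 1 ((n - 1) / 2), f k := by
  obtain ⟨m, rfl⟩ := hn
  have hsplit : Icc 1 (2 * m + 1 - 1) = Icc 1 m ∪ Icc (m + 1) (2 * m) := by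
    ext k; simp only [mem_union, mem_Icc]; omega
  have hupper : ∑ k ∈ Icc (m + 1) (2 * m), f k = ∑ k ∈ Icc 1 m, f k := by
    refine sum_nbij' (2 * m + 1 - ·) (2 * m + 1 - ·) ?_ ?_ ?_ ?_
      fun k hk ↦ (hf k (mem_Icc.mpr (by simp only [mem_Icc] at hk; omega))).symm
    all_goals intro k hk; simp only [mem_Icc] at hk ⊢; omega
  rw [hsplit, sum_union (disjoint_left.mpr fun k h₁ h₂ ↦ by simp only [mem_Icc] at h₁ h₂; omega),
    hupper, two_nsmul, show (2 * m + 1 - 1) / 2 = m by omega]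

theorem Finset.sum_Icc_id_mul_two (n : ℕ) : (∑ k ∈ Icc 1 (n - 1), k) * 2 = n * (n - 1) := by
  rcases eq_or_ne n 0 with rfl | hn
  · simp
  · rw [← sum_range_id_mul_two, sum_range_eq_add_sum_Icc hn, zero_add]

theorem sum_addChar_sq_mul_eq_quadraticChar_mul_gaussSum {F R : Type*} [Field F] [Fintype F]
    [DecidableEq F] [CommRing R] [IsDomain R] (hF : ringChar F ≠ 2) {ψ : AddChar F R}
    (hψ : ψ.IsPrimitive) {d : F} (hd : d ≠ 0) :
    ∑ x, ψ (x ^ 2 * d) =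
      quadraticChar F d * gaussSum ((quadraticChar F).ringHomComp (Int.castRingHom R)) ψ := by
  set χ := (quadraticChar F).ringHomComp (Int.castRingHom R)
  have hfiber : ∑ x, ψ (x ^ 2 * d) = ∑ y, (χ y + 1) * ψ (y * d) := by
    rw [← sum_fiberwise' univ (· ^ 2) fun y ↦ ψ (y * d)]
    refine sum_congr rfl fun y _ ↦ ?_
    have hcard : (#{x | x ^ 2 = y} : R) = χ y + 1 := by
      have := quadraticChar_card_sqrts hF y
      rw [Set.toFinset_ofPred] at this
      rw [← Int.cast_natCast, this]
      simp [χ]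
    rw [sum_const, nsmul_eq_mul, hcard]
  have hχd : χ d * χ d = 1 := by
    simp only [χ, MulChar.ringHomComp_apply, eq_intCast]
    rw [← Int.cast_mul, ← sq, quadraticChar_sq_one hd, Int.cast_one]
  have hshift : ∑ y, χ y * ψ (y * d) = χ d * gaussSum χ ψ := by
    rw [← gaussSum_mulShift χ ψ (Units.mk0 d hd), Units.val_mk0, ← mul_assoc, hχd, one_mul]
    simp only [gaussSum, AddChar.mulShift_apply, mul_comm d]
  rw [hfiber]
  simp only [add_mul, one_mul, sum_add_distrib, AddChar.sum_mulShift d hψ, if_neg hd,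
    Nat.cast_zero, add_zero, hshift]
  rfl

namespace IsPrimitiveRoot

variable {R : Type*} [CommRing R] [IsDomain R] {ℓ : ℕ} [Fact ℓ.Prime] {ζ : R}

theorem sum_range_pow_sq_mul (hℓ : ℓ ≠ 2) (hζ : IsPrimitiveRoot ζ ℓ) {d : ℕ} (hd : ¬ℓ ∣ d) :
    ∑ a ∈ range ℓ, ζ ^ (a ^ 2 * d) =
      legendreSym ℓ d * ∑ a ∈ Icc 1 (ℓ - 1), (legendreSym ℓ a : R) * ζ ^ a := by
  set ψ := AddChar.zmodChar ℓ hζ.pow_eq_one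
  have hF : ringChar (ZMod ℓ) ≠ 2 := by rwa [ZMod.ringChar_zmod_n]
  have hd' : (d : ZMod ℓ) ≠ 0 := by rwa [Ne, ZMod.natCast_eq_zero_iff]
  have hgauss : gaussSum ((quadraticChar (ZMod ℓ)).ringHomComp (Int.castRingHom R)) ψ =
      ∑ a ∈ Icc 1 (ℓ - 1), (legendreSym ℓ a : R) * ζ ^ a := by
    rw [gaussSum, ZMod.sum_eq_sum_range, sum_range_eq_add_sum_Icc (Fact.out : ℓ.Prime).ne_zero]
    simp [legendreSym, ψ, AddChar.zmodChar_apply']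
  calc ∑ a ∈ range ℓ, ζ ^ (a ^ 2 * d) = ∑ x : ZMod ℓ, ψ (x ^ 2 * d) := by
        rw [ZMod.sum_eq_sum_range]
        refine sum_congr rfl fun a _ ↦ ?_
        rw [← Nat.cast_pow, ← Nat.cast_mul, AddChar.zmodChar_apply']
    _ = _ := by
        rw [sum_addChar_sq_mul_eq_quadraticChar_mul_gaussSum hF
          (AddChar.zmodChar_primitive_of_primitive_root ℓ hζ) hd', hgauss, legendreSym,
          Int.cast_natCast]

theorem one_add_two_mul_sum_Icc_half_pow_sq_mul (hℓ : Odd ℓ) (hζ : IsPrimitiveRoot ζ ℓ) {d : ℕ}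
    (hd : ¬ℓ ∣ d) :
    1 + 2 * ∑ a ∈ Icc 1 ((ℓ - 1) / 2), ζ ^ (a ^ 2 * d) =
      legendreSym ℓ d * ∑ a ∈ Icc 1 (ℓ - 1), (legendreSym ℓ a : R) * ζ ^ a := by
  have hsymm : ∀ k ∈ Icc 1 (ℓ - 1), ζ ^ ((ℓ - k) ^ 2 * d) = ζ ^ (k ^ 2 * d) := by
    intro k hk
    have hkℓ : k ≤ ℓ := by simp only [mem_Icc] at hk; omega
    simp only [← AddChar.zmodChar_apply' hζ.pow_eq_one]
    push_cast [Nat.cast_sub hkℓ, ZMod.natCast_self]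
    congr 1
    ring
  rw [← sum_range_pow_sq_mul (by rintro rfl; exact absurd hℓ (by decide)) hζ hd,
    sum_range_eq_add_sum_Icc (Fact.out : ℓ.Prime).ne_zero,
    sum_Icc_eq_two_nsmul_sum_Icc_half hℓ _ hsymm, two_nsmul, two_mul,
    zero_pow two_ne_zero, zero_mul, pow_zero]

end IsPrimitiveRoot

/-- The character-sum identity behind Equation (6.11) (eq:ValueModular_r1) of
the paper: for an odd prime `ℓ`, a primitive `ℓ`-th root of unity `ζ ∈ ℂ` and
the quadratic Gauss sum `G = ∑_{a=1}^{ℓ-1} (a/ℓ) ζ^a`,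
`∑_{d=1}^{ℓ-1} (d/ℓ)·∑_{a=1}^{(ℓ-1)/2} ζ^{a²d}
  = -(ℓ-1)/4 + (G/(2ℓ))·∑_{d=1}^{ℓ-1} d·(d/ℓ)` (here the first `d/ℓ` is the
rational number `d/ℓ` and the weights `(d/ℓ)` in the last sum are Legendre
symbols). -/
theorem gauss_sum_weighted_sum
    (ℓ : ℕ) [Fact ℓ.Prime] (hℓ : Odd ℓ)
    (ζ : ℂ) (hζ : IsPrimitiveRoot ζ ℓ)
    (G : ℂ) (hG : G = ∑ a ∈ Finset.Icc 1 (ℓ - 1), (legendreSym ℓ a : ℂ) * ζ ^ a) :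
    ∑ d ∈ Finset.Icc 1 (ℓ - 1), ((d : ℂ) / (ℓ : ℂ)) *
        ∑ a ∈ Finset.Icc 1 ((ℓ - 1) / 2), ζ ^ (a ^ 2 * d) =
      -(((ℓ : ℂ) - 1) / 4) +
        (G / (2 * (ℓ : ℂ))) *
          ∑ d ∈ Finset.Icc 1 (ℓ - 1), (d : ℂ) * (legendreSym ℓ d : ℂ) := by
  have hℓ0 : ℓ ≠ 0 := (Fact.out : ℓ.Prime).ne_zero
  have hinner : ∀ d ∈ Icc 1 (ℓ - 1),
      ∑ a ∈ Icc 1 ((ℓ - 1) / 2), ζ ^ (a ^ 2 * d) = (legendreSym ℓ d * G - 1) / 2 := by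
    intro d hd
    obtain ⟨hd₁, hd₂⟩ := mem_Icc.mp hd
    have hdvd : ¬ℓ ∣ d := Nat.not_dvd_of_pos_of_lt hd₁ (by omega)
    have hhalf := hζ.one_add_two_mul_sum_Icc_half_pow_sq_mul hℓ hdvd
    rw [← hG] at hhalf
    linear_combination hhalf / 2
  have hterm : ∀ d : ℕ, (d : ℂ) / ℓ * ((legendreSym ℓ d * G - 1) / 2) =
      G / (2 * ℓ) * (d * legendreSym ℓ d) - d / (2 * ℓ) := fun _ ↦ by ring
  have hsum : ∑ d ∈ Icc 1 (ℓ - 1), (d : ℂ) = ℓ * (ℓ - 1) / 2 := by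
    have := congrArg (Nat.cast : ℕ → ℂ) (sum_Icc_id_mul_two ℓ)
    push_cast [Nat.cast_sub (Nat.one_le_iff_ne_zero.mpr hℓ0)] at this
    linear_combination this / 2
  rw [sum_congr rfl fun d hd ↦ by rw [hinner d hd, hterm d], sum_sub_distrib, ← sum_div,
    ← mul_sum, hsum]
  field_simp
  ring
end
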